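/- Let p > 3 be prime, q a power of p, and n \ge 0 an integer with 3 | n. If x \mapsto F_n(1,x) is a bijection of F_q, then gcd(n, q^2 - 1) = 3. -/

import Mathlib

/-!
Substituting `x = y (1 - y)` turns the recurrence into a Lucas sequence with roots `y` and `1 - y`:
`(2y - 1) F_n(1, y(1 - y)) = yⁿ - (1 - y)ⁿ`. For `y = u / (1 + u)` the right side vanishes as soon
as `uⁿ = 1`, so `F_n(1, u / (1 + u)²) = 0`; also `F_n(1, 1) = 0` because `3 ∣ n`.
If `gcd(n, q² - 1) ≠ 3`, then, as `q` is prime to `6`, some `m ≥ 4` divides `n` and `q - 1` or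
`q + 1`. A primitive `m`-th root of unity `u` then satisfies `u^q = u^{±1}`, and since
`u / (1 + u)²` is invariant under `u ↦ u⁻¹` it is fixed by Frobenius, hence lies in `𝔽_q`. It differs
from `1` because `u³ ≠ 1`, so `x ↦ F_n(1, x)` is not injective.
-/

def F3 {K : Type*} [Field K] (x : K) : ℕ → K
  | 0 => 0
  | 1 => 1
  | (n + 2) => F3 x (n + 1) - x * F3 x n

section F3

variable {K : Type*} [Field K]

lemma F3_add_two (x : K) (n : ℕ) : F3 x (n + 2) = F3 x (n + 1) - x * F3 x n := rfl

lemma map_F3 {L : Type*} [Field L] (f : K →+* L) (x : K) (n : ℕ) :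
    f (F3 x n) = F3 (f x) n := by
  induction n using Nat.twoStepInduction with
  | zero => simp [F3]
  | one => simp [F3]
  | more n ih₁ ih₂ => rw [F3_add_two, F3_add_two, map_sub, map_mul, ih₁, ih₂]

lemma F3_one_three_mul (k : ℕ) : F3 (1 : K) (3 * k) = 0 := by
  induction k with
  | zero => rfl
  | succ k ih =>
    rw [show 3 * (k + 1) = 3 * k + 1 + 2 by ring, F3_add_two, F3_add_two, ih]
    simp

lemma two_mul_sub_one_mul_F3 (y : K) (n : ℕ) :
    (2 * y - 1) * F3 (y * (1 - y)) n = y ^ n - (1 - y) ^ n := by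
  induction n using Nat.twoStepInduction with
  | zero => simp [F3]
  | one => simp [F3]; ring
  | more n ih₁ ih₂ =>
    rw [F3_add_two]
    linear_combination ih₂ - y * (1 - y) * ih₁

lemma F3_div_one_add_sq_eq_zero {u : K} {n : ℕ} (hun : u ^ n = 1) (hu : u ≠ 1)
    (hu' : 1 + u ≠ 0) : F3 (u / (1 + u) ^ 2) n = 0 := by
  have hy : u / (1 + u) * (1 - u / (1 + u)) = u / (1 + u) ^ 2 := by
    field_simp
    ring
  have h2y : 2 * (u / (1 + u)) - 1 ≠ 0 := by
    rw [show 2 * (u / (1 + u)) - 1 = (u - 1) / (1 + u) by field_simp; ring]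
    exact div_ne_zero (sub_ne_zero.mpr hu) hu'
  have key := two_mul_sub_one_mul_F3 (u / (1 + u)) n
  rw [hy, show 1 - u / (1 + u) = 1 / (1 + u) by field_simp; ring, div_pow, div_pow, hun,
    one_pow, sub_self] at key
  exact (mul_eq_zero.mp key).resolve_left h2y

end F3

lemma inv_div_one_add_inv_sq {K : Type*} [Field K] (u : K) :
    u⁻¹ / (1 + u⁻¹) ^ 2 = u / (1 + u) ^ 2 := by
  rcases eq_or_ne u 0 with rfl | hu
  · simp
  field_simp
  ring

section FiniteField

variable {K L : Type*} [Field K] [Fintype K] [Field L] [Algebra K L]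

open Polynomial in
theorem FiniteField.mem_range_algebraMap_of_pow_card_eq_self {x : L}
    (hx : x ^ Fintype.card K = x) : x ∈ (algebraMap K L).range := by
  have hne := FiniteField.X_pow_card_sub_X_ne_zero K (Fintype.one_lt_card (α := K))
  have hsplit : Splits (X ^ Fintype.card K - X : K[X]) := by
    rw [splits_iff_card_roots, FiniteField.roots_X_pow_card_sub_X, ← Finset.card_def,
      Finset.card_univ, FiniteField.X_pow_card_sub_X_natDegree_eq K Fintype.one_lt_card]
  exact hsplit.mem_range_of_isRoot hne (by simp [hx])

lemma FiniteField.div_one_add_sq_pow_card {u : L}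
    (hu : u ^ Fintype.card K = u ∨ u ^ Fintype.card K * u = 1) :
    (u / (1 + u) ^ 2) ^ Fintype.card K = u / (1 + u) ^ 2 := by
  have hfrob := map_div₀ (FiniteField.frobeniusAlgHom K L) u ((1 + u) ^ 2)
  simp only [FiniteField.coe_frobeniusAlgHom, map_pow, map_add, map_one] at hfrob
  rcases hu with hu | hu
  · rw [hfrob, hu]
  · rw [hfrob, eq_inv_of_mul_eq_one_left hu, inv_div_one_add_inv_sq]

lemma FiniteField.natCast_ne_zero_of_dvd_card_sub_one_or_add_one {m : ℕ}
    (hm : m ∣ Fintype.card K - 1 ∨ m ∣ Fintype.card K + 1) : (m : L) ≠ 0 := by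
  have hq : (Fintype.card K : L) = 0 := by
    rw [← map_natCast (algebraMap K L), FiniteField.cast_card_eq_zero, map_zero]
  intro hm0
  rcases hm with ⟨k, hk⟩ | ⟨k, hk⟩
  · have := congrArg (Nat.cast : ℕ → L) hk
    rw [Nat.cast_sub Fintype.card_pos, hq, Nat.cast_mul, hm0] at this
    simp at this
  · have := congrArg (Nat.cast : ℕ → L) hk
    rw [Nat.cast_add, hq, Nat.cast_mul, hm0] at this
    simp at this

end FiniteField

theorem exists_ne_one_F3_eq_zero (K : Type*) [Field K] [Fintype K] {m n : ℕ} (hm : 4 ≤ m)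
    (hmn : m ∣ n) (hmq : m ∣ Fintype.card K - 1 ∨ m ∣ Fintype.card K + 1) :
    ∃ x : K, x ≠ 1 ∧ F3 x n = 0 := by
  let L := AlgebraicClosure K
  have : NeZero (m : L) := ⟨FiniteField.natCast_ne_zero_of_dvd_card_sub_one_or_add_one hmq⟩
  obtain ⟨u, hu⟩ := HasEnoughRootsOfUnity.exists_primitiveRoot L m
  have hu_pow : ∀ k, 0 < k → k ≤ 3 → u ^ k ≠ 1 := fun k hk hk3 h => by
    have := Nat.le_of_dvd hk ((hu.pow_eq_one_iff_dvd k).1 h)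
    omega
  have hu1 : u ≠ 1 := by simpa using hu_pow 1
  have hu1' : 1 + u ≠ 0 := fun h => hu_pow 2 (by norm_num) (by norm_num) <| by
    rw [← neg_eq_of_add_eq_zero_right h]
    norm_num
  have hu_frob : u ^ Fintype.card K = u ∨ u ^ Fintype.card K * u = 1 := by
    rcases hmq with h | h
    · left
      rw [← Nat.sub_add_cancel Fintype.card_pos, pow_succ, (hu.pow_eq_one_iff_dvd _).2 h, one_mul]
    · right
      rw [← pow_succ, (hu.pow_eq_one_iff_dvd _).2 h]
  obtain ⟨x, hx⟩ := FiniteField.mem_range_algebraMap_of_pow_card_eq_self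
    (FiniteField.div_one_add_sq_pow_card hu_frob)
  refine ⟨x, ?_, (algebraMap K L).injective ?_⟩
  · rintro rfl
    rw [map_one, eq_comm, div_eq_one_iff_eq (pow_ne_zero 2 hu1')] at hx
    exact hu_pow 3 (by norm_num) le_rfl (by linear_combination (1 - u) * hx)
  · rw [map_F3, hx, map_zero]
    exact F3_div_one_add_sq_eq_zero ((hu.pow_eq_one_iff_dvd n).2 hmn) hu1 hu1'

lemma Nat.gcd_sq_sub_one_eq_three {n q : ℕ} (hq : 1 < q) (hq2 : ¬ 2 ∣ q) (hq3 : ¬ 3 ∣ q)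
    (hn : 3 ∣ n) (h : ∀ m, m ∣ n → (m ∣ q - 1 ∨ m ∣ q + 1) → m ≤ 3) :
    n.gcd (q ^ 2 - 1) = 3 := by
  have hq2' : 2 ∣ q - 1 ∧ 2 ∣ q + 1 := by omega
  have hq3' : 3 ∣ q - 1 ∨ 3 ∣ q + 1 := by
    have : q % 3 = 1 ∨ q % 3 = 2 := by omega
    omega
  obtain ⟨a, ha⟩ : ∃ a, n.gcd (q - 1) = a := ⟨_, rfl⟩
  obtain ⟨b, hb⟩ : ∃ b, n.gcd (q + 1) = b := ⟨_, rfl⟩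
  have han : a ∣ n := ha ▸ Nat.gcd_dvd_left ..
  have hbn : b ∣ n := hb ▸ Nat.gcd_dvd_left ..
  have haq : a ∣ q - 1 := ha ▸ Nat.gcd_dvd_right ..
  have hbq : b ∣ q + 1 := hb ▸ Nat.gcd_dvd_right ..
  have ha0 : 0 < a := ha ▸ Nat.gcd_pos_of_pos_right _ (by omega)
  have hb0 : 0 < b := hb ▸ Nat.gcd_pos_of_pos_right _ (by omega)
  have ha3 : a ≤ 3 := h a han (.inl haq)
  have hb3 : b ≤ 3 := h b hbn (.inr hbq)
  have h3 : 3 ∣ a ∨ 3 ∣ b := by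
    rcases hq3' with h | h
    exacts [.inl (ha ▸ Nat.dvd_gcd hn h), .inr (hb ▸ Nat.dvd_gcd hn h)]
  have h2 : 2 ∣ n → 2 ∣ a ∧ 2 ∣ b := fun h2 =>
    ⟨ha ▸ Nat.dvd_gcd h2 hq2'.1, hb ▸ Nat.dvd_gcd h2 hq2'.2⟩
  have hab : a * b = 3 := by
    interval_cases a <;> interval_cases b <;> omega
  have hfac : q ^ 2 - 1 = (q - 1) * (q + 1) := by
    simpa [mul_comm] using Nat.sq_sub_sq q 1
  refine Nat.dvd_antisymm ?_ (Nat.dvd_gcd hn ?_)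
  · rw [← hab, ← ha, ← hb, hfac]
    exact gcd_mul_dvd_mul_gcd n (q - 1) (q + 1)
  · rw [← hab, hfac]
    exact Nat.mul_dvd_mul haq hbq

theorem stmt18_general {K : Type*} [Field K] [Fintype K] (p e : ℕ) (hp : p.Prime) (hp3 : 3 < p)
    (hcard : Fintype.card K = p ^ e) (n : ℕ) (hn3 : 3 ∣ n)
    (hbij : Function.Bijective (fun x : K => F3 x n)) :
    Nat.gcd n (Fintype.card K ^ 2 - 1) = 3 := by
  have hq : ∀ r, r.Prime → r < p → ¬ r ∣ Fintype.card K := fun r hr hrp hrq => by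
    rw [hcard] at hrq
    exact hrp.ne ((Nat.prime_dvd_prime_iff_eq hr hp).1 (hr.dvd_of_dvd_pow hrq))
  refine Nat.gcd_sq_sub_one_eq_three Fintype.one_lt_card (hq 2 Nat.prime_two (by omega))
    (hq 3 Nat.prime_three hp3) hn3 fun m hmn hmq => ?_
  by_contra! hm
  obtain ⟨x, hx1, hx⟩ := exists_ne_one_F3_eq_zero K hm hmn hmq
  obtain ⟨k, rfl⟩ := hn3
  exact hx1 (hbij.injective (hx.trans (F3_one_three_mul k).symm))

theorem stmt18 {K : Type*} [Field K] [Fintype K] (p e : ℕ) (hp : p.Prime) (hp3 : 3 < p)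
    [CharP K p] (hcard : Fintype.card K = p ^ e) (n : ℕ) (hn3 : 3 ∣ n)
    (hbij : Function.Bijective (fun x : K => F3 x n)) :
    Nat.gcd n (Fintype.card K ^ 2 - 1) = 3 :=
  stmt18_general p e hp hp3 hcard n hn3 hbij
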